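/- Let K > 1 be an integer and W ≥ 1 an integer. Let c_1, …, c_W and x_1, …, x_W be reals, and define d_w = c_w·K if sin(x_w) = 0 and d_w = c_w·sin(K·x_w)/sin(x_w) otherwise. Let S be a subset of {1, …, W} with |S| = ⌈W/2⌉ such that |d_{w'}| ≤ |d_w| for every w ∈ S and w' ∉ S. Then for any fixed values y_w (w ∉ S) there exist values y_w (w ∈ S) such that ∑_{w=1}^{W} c_w·f(x_w, y_w) ≤ 0. -/

import Mathlib

open Real Finset

/-- `f(x, y) = ∑_{k=0}^{K−1} cos(y − 2kx)`. -/
noncomputable def f (K : ℕ) (x y : ℝ) : ℝ :=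
  ∑ k ∈ Finset.range K, Real.cos (y - 2 * (k : ℝ) * x)

/-!
Each term is a pure cosine wave in `y`: by the Dirichlet-kernel identity
`sin x · f(x, y) = sin(Kx) · cos(y − (K−1)x)`, the term `c_w f(x_w, y)` equals
`d_w cos(y − θ_w)` for some phase `θ_w`. On `S` choose `y_w` so that the term is `−|d_w|`;
each of the at most `|S|` terms outside `S` is at most `|d_{w'}|`, and these are dominated by
the `|d_w|`, `w ∈ S`.
-/

theorem Finset.sum_le_sum_of_card_le_of_forall_le {ι : Type*} {s t : Finset ι} {g : ι → ℝ}
    (hcard : #t ≤ #s) (hs : ∀ i ∈ s, 0 ≤ g i) (hle : ∀ i ∈ s, ∀ j ∈ t, g j ≤ g i) :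
    ∑ j ∈ t, g j ≤ ∑ i ∈ s, g i := by
  rcases s.eq_empty_or_nonempty with rfl | hne
  · simp_all
  have hm : 0 ≤ s.inf' hne g := (Finset.le_inf'_iff _ _).2 hs
  calc ∑ j ∈ t, g j ≤ #t • s.inf' hne g :=
        Finset.sum_le_card_nsmul _ _ _ fun j hj => Finset.le_inf' _ _ fun i hi => hle i hi j hj
    _ ≤ #s • s.inf' hne g := nsmul_le_nsmul_left hm hcard
    _ ≤ ∑ i ∈ s, g i := Finset.card_nsmul_le_sum _ _ _ fun i hi => Finset.inf'_le _ hi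

theorem Real.sin_mul_sum_range_cos_sub (K : ℕ) (x y : ℝ) :
    sin x * ∑ k ∈ range K, cos (y - 2 * k * x) = sin (K * x) * cos (y - (K - 1) * x) := by
  induction K with
  | zero => simp
  | succ K ih =>
    rw [sum_range_succ, mul_add, ih]
    push_cast
    have h₁ : y - (K - 1) * x = (y - K * x) + x := by ring
    have h₂ : y - 2 * K * x = (y - K * x) - K * x := by ring
    have h₃ : y - (K + 1 - 1) * x = y - K * x := by ring
    rw [h₁, h₂, h₃, add_mul, one_mul]
    generalize y - K * x = u
    rw [cos_add, cos_sub, sin_add]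
    ring

theorem f_of_sin_eq_zero (K : ℕ) {x : ℝ} (hx : sin x = 0) (y : ℝ) : f K x y = K * cos y := by
  obtain ⟨n, rfl⟩ := sin_eq_zero_iff.mp hx
  have hterm (k : ℕ) : cos (y - 2 * k * (n * π)) = cos y := by
    rw [show y - 2 * k * (n * π) = y - ((k * n : ℤ) : ℝ) * (2 * π) by push_cast; ring,
      cos_sub_int_mul_two_pi]
  simp [f, hterm]

theorem f_of_sin_ne_zero (K : ℕ) {x : ℝ} (hx : sin x ≠ 0) (y : ℝ) :
    f K x y = sin (K * x) / sin x * cos (y - (K - 1) * x) := by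
  rw [div_mul_eq_mul_div, eq_div_iff hx, mul_comm, f, sin_mul_sum_range_cos_sub]

theorem exists_phase_f_eq_mul_cos (K : ℕ) (x : ℝ) :
    ∃ θ, ∀ y, f K x y = (if sin x = 0 then (K : ℝ) else sin (K * x) / sin x) * cos (y - θ) := by
  by_cases hx : sin x = 0
  · exact ⟨0, fun y => by simp [hx, f_of_sin_eq_zero K hx]⟩
  · exact ⟨(K - 1) * x, fun y => by simp [hx, f_of_sin_ne_zero K hx]⟩

theorem Real.exists_mul_cos_sub_eq_neg_abs (a θ : ℝ) : ∃ y, a * cos (y - θ) = -|a| := by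
  rcases le_or_gt 0 a with ha | ha
  · exact ⟨θ + π, by simp [abs_of_nonneg ha]⟩
  · exact ⟨θ, by simp [abs_of_neg ha]⟩

theorem exists_sum_mul_cos_sub_nonpos {ι : Type*} [Fintype ι] [DecidableEq ι]
    (a θ y₀ : ι → ℝ) (S : Finset ι) (hcard : #Sᶜ ≤ #S)
    (hS : ∀ w ∈ S, ∀ w' ∉ S, |a w'| ≤ |a w|) :
    ∃ y : ι → ℝ, (∀ w ∉ S, y w = y₀ w) ∧ ∑ w, a w * cos (y w - θ w) ≤ 0 := by
  choose z hz using fun w => exists_mul_cos_sub_eq_neg_abs (a w) (θ w)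
  refine ⟨fun w => if w ∈ S then z w else y₀ w, fun w hw => if_neg hw, ?_⟩
  have hin : ∑ w ∈ S, a w * cos ((if w ∈ S then z w else y₀ w) - θ w) = -∑ w ∈ S, |a w| := by
    rw [← sum_neg_distrib]
    exact sum_congr rfl fun w hw => by rw [if_pos hw, hz]
  have hout : ∑ w ∈ Sᶜ, a w * cos ((if w ∈ S then z w else y₀ w) - θ w) ≤ ∑ w ∈ Sᶜ, |a w| :=
    sum_le_sum fun w _ => (le_abs_self _).trans <| by
      rw [abs_mul]; exact mul_le_of_le_one_right (abs_nonneg _) (abs_cos_le_one _)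
  have hdom : ∑ w ∈ Sᶜ, |a w| ≤ ∑ w ∈ S, |a w| :=
    sum_le_sum_of_card_le_of_forall_le hcard (fun _ _ => abs_nonneg _)
      fun w hw w' hw' => hS w hw w' (mem_compl.mp hw')
  rw [← sum_add_sum_compl S, hin]
  linarith

theorem stmt_8_general (K W : ℕ)
    (c x : Fin W → ℝ)
    (d : Fin W → ℝ)
    (hd : ∀ w, d w = if Real.sin (x w) = 0 then c w * K
                     else c w * Real.sin ((K : ℝ) * x w) / Real.sin (x w))
    (S : Finset (Fin W)) (hScard : S.card = (W + 1) / 2)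
    (hS : ∀ w ∈ S, ∀ w' ∉ S, |d w'| ≤ |d w|)
    (y₀ : Fin W → ℝ) :
    ∃ y : Fin W → ℝ, (∀ w ∉ S, y w = y₀ w) ∧
      ∑ w, c w * f K (x w) (y w) ≤ 0 := by
  choose θ hθ using fun w => exists_phase_f_eq_mul_cos K (x w)
  have hterm (w : Fin W) (y : ℝ) : c w * f K (x w) y = d w * cos (y - θ w) := by
    rw [hθ, hd]
    split_ifs <;> ring
  have hcard : #Sᶜ ≤ #S := by
    rw [card_compl, Fintype.card_fin, hScard]
    omega
  obtain ⟨y, hy, hsum⟩ := exists_sum_mul_cos_sub_nonpos d θ y₀ S hcard hS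
  exact ⟨y, hy, by simpa only [hterm] using hsum⟩

/-- Lemma 4: for `K > 1`, `W ≥ 1`, reals `c_w, x_w`, with
`d_w = c_w·K` if `sin(x_w) = 0` and `d_w = c_w·sin(K x_w)/sin(x_w)` otherwise, and a
subset `S` of the indices with `|S| = ⌈W/2⌉` containing indices of largest `|d_w|`:
for any fixed values `y_w` outside `S`, the values `y_w` on `S` can be chosen so that
`∑_w c_w·f(x_w, y_w) ≤ 0`. -/
theorem stmt_8 (K W : ℕ) (hK : 1 < K) (hW : 1 ≤ W)
    (c x : Fin W → ℝ)
    (d : Fin W → ℝ)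
    (hd : ∀ w, d w = if Real.sin (x w) = 0 then c w * K
                     else c w * Real.sin ((K : ℝ) * x w) / Real.sin (x w))
    (S : Finset (Fin W)) (hScard : S.card = (W + 1) / 2)
    (hS : ∀ w ∈ S, ∀ w' ∉ S, |d w'| ≤ |d w|)
    (y₀ : Fin W → ℝ) :
    ∃ y : Fin W → ℝ, (∀ w ∉ S, y w = y₀ w) ∧
      ∑ w, c w * f K (x w) (y w) ≤ 0 :=
  stmt_8_general K W c x d hd S hScard hS y₀
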